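/- arXiv:1405.4255 — 5 statements merged into one kernel-verified Lean document; each statement's English description precedes it below -/
import Mathlib

section
/- Let φ(u) := (e^{-u}(-2+4u-u²) + e^{-2u}(4-4u-u²) - 2e^{-3u})/(1-e^{-u})³ for u > 0. Then there exists a constant C > 0 such that |φ(u)| ≤ C e^{-u/2} for all u > 0. -/
/-- The radial profile `φ` of the truncated pair correlation. -/
noncomputable def phi (u : ℝ) : ℝ :=
  (Real.exp (-u) * (-2 + 4*u - u^2) + Real.exp (-2*u) * (4 - 4*u - u^2)
    - 2 * Real.exp (-3*u)) / (1 - Real.exp (-u))^3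

/-- There is a constant `C > 0` such that `|φ(u)| ≤ C e^{-u/2}` for all `u > 0`. -/
theorem stmt_1 :
    ∃ C : ℝ, 0 < C ∧ ∀ u : ℝ, 0 < u → |phi u| ≤ C * Real.exp (-u/2) := by
  refine ⟨400, by norm_num, fun u hu => ?_⟩
  set x := Real.exp (-u) with hxdef
  have hx0 : (0:ℝ) < x := Real.exp_pos _
  have hx1 : x < 1 := by
    rw [hxdef]
    exact Real.exp_lt_one_iff.mpr (by linarith)
  set t := 1 - x with htdef
  clear_value t
  clear_value x
  have ht0 : (0:ℝ) < t := by linarith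
  have ht1 : t < 1 := by linarith
  -- the key algebraic identity
  have hnum : phi u = x * (u^2 * t - 2*(u - t)^2) / t^3 := by
    unfold phi
    rw [show (-2:ℝ)*u = -u + -u by ring, show (-3:ℝ)*u = -u + (-u + -u) by ring,
        Real.exp_add, Real.exp_add, Real.exp_add, ← hxdef, htdef]
    ring
  -- exp bounds
  have hEh0 : (0:ℝ) < Real.exp (-u/2) := Real.exp_pos _
  have hxEh : x = Real.exp (-u/2) * Real.exp (-u/2) := by
    rw [hxdef, ← Real.exp_add, show -u/2 + -u/2 = -u by ring]
  have hquad : 1 + u + u^2/2 ≤ Real.exp u := by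
    have := Real.quadratic_le_exp_of_nonneg hu.le
    linarith
  have hxinv : Real.exp u * x = 1 := by
    rw [hxdef, ← Real.exp_add]; simp
  -- t ≤ u
  have htu : t ≤ u := by
    have := Real.add_one_le_exp (-u)
    rw [← hxdef] at this; simp only [htdef]; linarith
  -- u - t ≤ u^2/2, i.e. x ≤ 1 - u + u^2/2
  have hut : u - t ≤ u^2/2 := by
    have h1 : (1 + u + u^2/2) * x ≤ 1 := by
      calc (1 + u + u^2/2) * x ≤ Real.exp u * x := by
            apply mul_le_mul_of_nonneg_right hquad hx0.le
        _ = 1 := hxinv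
    nlinarith [sq_nonneg (u^2/2), sq_nonneg u, mul_pos hx0 (mul_pos hu hu)]
  have hut0 : 0 ≤ u - t := by linarith
  -- u * x ≤ t
  have htx : u * x ≤ t := by
    have h1 : (1 + u) * x ≤ 1 := by
      calc (1 + u) * x ≤ Real.exp u * x := by
            apply mul_le_mul_of_nonneg_right _ hx0.le
            have := Real.add_one_le_exp u; linarith
        _ = 1 := hxinv
    simp only [htdef]; nlinarith
  -- bound |phi u| by the nonnegative version
  have habs : |phi u| ≤ x * (u^2 * t + 2*(u - t)^2) / t^3 := by
    rw [hnum, abs_div, abs_of_pos (pow_pos ht0 3), abs_mul, abs_of_pos hx0]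
    gcongr
    calc |u^2 * t - 2*(u-t)^2| ≤ |u^2 * t| + |2*(u-t)^2| := abs_sub _ _
      _ = u^2 * t + 2*(u-t)^2 := by
          rw [abs_of_nonneg (by positivity), abs_of_nonneg (by positivity)]
  refine habs.trans ?_
  rw [div_le_iff₀ (pow_pos ht0 3)]
  -- now two cases
  rcases le_or_gt u 1 with hcase | hcase
  · -- small u : 0 < u ≤ 1
    have hxe : Real.exp (-1) ≤ x := by
      rw [hxdef]; exact Real.exp_le_exp.mpr (by linarith)
    have he3 : Real.exp 1 < 3 := by
      have := Real.exp_one_lt_d9; linarith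
    have hxe3 : (1:ℝ)/3 ≤ x := by
      have h1 : Real.exp 1 * Real.exp (-1) = 1 := by rw [← Real.exp_add]; simp
      have h2 : (0:ℝ) < Real.exp (-1) := Real.exp_pos _
      have h5 := mul_le_mul_of_nonneg_right he3.le (Real.exp_pos (-1)).le
      rw [h1] at h5
      linarith
    have hEhhalf : (1:ℝ)/3 ≤ Real.exp (-u/2) := by
      have h1 : Real.exp (-u/2) * Real.exp (u/2) = 1 := by
        rw [← Real.exp_add, show -u/2 + u/2 = 0 by ring, Real.exp_zero]
      have h2 : Real.exp (u/2) ≤ Real.exp 1 := Real.exp_le_exp.mpr (by linarith)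
      have h5 := mul_le_mul_of_nonneg_left (h2.trans he3.le) hEh0.le
      rw [h1] at h5
      linarith
    -- t^3 ≥ u^3 x^3
    have ht3 : u^3 * x^3 ≤ t^3 := by
      calc u^3 * x^3 = (u*x)^3 := by ring
        _ ≤ t^3 := pow_le_pow_left₀ (by positivity) htx 3
    -- numerator bound
    have hn1 : u^2 * t ≤ u^3 := by
      have h := mul_le_mul_of_nonneg_left htu (sq_nonneg u)
      calc u^2 * t ≤ u^2 * u := h
        _ = u^3 := by ring
    have hq1 : (u-t)^2 ≤ u^4/4 := by
      have h := mul_self_le_mul_self hut0 hut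
      calc (u-t)^2 = (u-t)*(u-t) := by ring
        _ ≤ (u^2/2)*(u^2/2) := h
        _ = u^4/4 := by ring
    have hq2 : u^4 ≤ u^3 := by
      have h := mul_le_mul_of_nonneg_left hcase (pow_pos hu 3).le
      calc u^4 = u^3*u := by ring
        _ ≤ u^3*1 := h
        _ = u^3 := by ring
    have hsum : u^2 * t + 2*(u-t)^2 ≤ (3/2) * u^3 := by linarith
    have hL : x * (u^2 * t + 2*(u - t)^2) ≤ x * ((3/2) * u^3) :=
      mul_le_mul_of_nonneg_left hsum hx0.le
    have hx2 : (1:ℝ)/9 ≤ x^2 := by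
      calc (1:ℝ)/9 = (1/3)*(1/3) := by norm_num
        _ ≤ x*x := mul_le_mul hxe3 hxe3 (by norm_num) hx0.le
        _ = x^2 := by ring
    have hmid : x * ((3/2) * u^3) ≤ 100 * (u^3 * x^3) := by
      have hpos : (0:ℝ) ≤ u^3*x := by positivity
      calc x*((3/2)*u^3) = (3/2)*(u^3*x) := by ring
        _ ≤ (100/9)*(u^3*x) := mul_le_mul_of_nonneg_right (by norm_num) hpos
        _ = 100*(u^3*x)*(1/9) := by ring
        _ ≤ 100*(u^3*x)*x^2 := mul_le_mul_of_nonneg_left hx2 (by positivity)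
        _ = 100*(u^3*x^3) := by ring
    have hc1 : 100 * (u^3 * x^3) ≤ 100 * t^3 := by linarith [ht3]
    have hc2 : 100 * t^3 ≤ 400 * Real.exp (-u/2) * t^3 := by
      have h := mul_le_mul_of_nonneg_right hEhhalf (pow_pos ht0 3).le
      linarith [h, (pow_pos ht0 3)]
    linarith
  · -- large u : u > 1
    have hthalf : (1:ℝ)/2 ≤ t := by
      have hxe : x ≤ Real.exp (-1) := by
        rw [hxdef]; exact Real.exp_le_exp.mpr (by linarith)
      have h1 : Real.exp 1 * Real.exp (-1) = 1 := by rw [← Real.exp_add]; simp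
      have h2 : (2:ℝ) ≤ Real.exp 1 := by
        have := Real.add_one_le_exp (1:ℝ); linarith
      have h3 : (0:ℝ) < Real.exp (-1) := Real.exp_pos _
      have h4 : Real.exp (-1) ≤ 1/2 := by
        have h5 := mul_le_mul_of_nonneg_right h2 h3.le
        rw [h1] at h5
        linarith
      simp only [htdef]; linarith
    -- u^2 * exp(-u/2) ≤ 8
    have hu2 : u^2 * Real.exp (-u/2) ≤ 8 := by
      have h1 : 1 + u/2 + (u/2)^2/2 ≤ Real.exp (u/2) :=
        Real.quadratic_le_exp_of_nonneg (by linarith)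
      have h2 : Real.exp (u/2) * Real.exp (-u/2) = 1 := by
        rw [← Real.exp_add, show u/2 + -u/2 = 0 by ring, Real.exp_zero]
      have h3 : (1 + u/2 + (u/2)^2/2) * Real.exp (-u/2) ≤ 1 := by
        calc (1 + u/2 + (u/2)^2/2) * Real.exp (-u/2)
            ≤ Real.exp (u/2) * Real.exp (-u/2) :=
              mul_le_mul_of_nonneg_right h1 hEh0.le
          _ = 1 := h2
      nlinarith [mul_nonneg hu.le hEh0.le, hEh0.le, h3]
    -- numerator bounds
    have hn1 : u^2 * t ≤ u^2 := by
      have h := mul_le_mul_of_nonneg_left ht1.le (sq_nonneg u)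
      calc u^2 * t ≤ u^2 * 1 := h
        _ = u^2 := by ring
    have hq1 : (u-t)^2 ≤ u^2 := by
      have h := mul_self_le_mul_self hut0 (by linarith : u - t ≤ u)
      calc (u-t)^2 = (u-t)*(u-t) := by ring
        _ ≤ u*u := h
        _ = u^2 := by ring
    have hsum : u^2 * t + 2*(u-t)^2 ≤ 3 * u^2 := by linarith
    have hL : x * (u^2 * t + 2*(u - t)^2) ≤ x * (3 * u^2) :=
      mul_le_mul_of_nonneg_left hsum hx0.le
    have hkey : x * (3 * u^2) ≤ 24 * Real.exp (-u/2) := by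
      rw [hxEh]
      have h := mul_le_mul_of_nonneg_right hu2 hEh0.le
      linarith [h, hEh0.le]
    have hRHS : 50 * Real.exp (-u/2) ≤ 400 * Real.exp (-u/2) * t^3 := by
      have h8 : (1/2:ℝ)^3 ≤ t^3 := pow_le_pow_left₀ (by norm_num) hthalf 3
      have h9 := mul_le_mul_of_nonneg_left h8
        (by positivity : (0:ℝ) ≤ 400 * Real.exp (-u/2))
      linarith [h9]
    linarith
end

section
/- Let φ(u) := (e^{-u}(-2+4u-u²) + e^{-2u}(4-4u-u²) - 2e^{-3u})/(1-e^{-u})³ for u > 0. Then for every real α > 0, the function u ↦ u^α φ(u) is integrable on (0,∞) and ∫₀^∞ u^α φ(u) du = α(1-α) Γ(α+1) ζ(α+1), where Γ is the Gamma function and ζ(s) = ∑_{n=1}^{∞} n^{-s} is the Riemann zeta function. -/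
open MeasureTheory

/-!
Expanding `(1 - e^{-u})⁻³` as a binomial series gives `φ(u) = ∑_{n ≥ 1} k(n u)` with
`k(t) = (-t² + 4t - 2) e^{-t}`. The substitution `t = n u` turns `∫₀^∞ u^α k(n u) du` into
`n^{-(α+1)} ∫₀^∞ t^α k(t) dt`, and this last integral is
`-Γ(α+3) + 4Γ(α+2) - 2Γ(α+1) = α(1-α)Γ(α+1)`. The same substitution applied to `|k|` shows
that the integrals of the norms of the terms are summable, which justifies exchanging sum and
integral.
-/

open Real Set

theorem MeasureTheory.Integrable.of_hasSum_of_summable_integral_norm {X E ι : Type*}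
    [MeasurableSpace X] {μ : Measure X} [NormedAddCommGroup E] [Countable ι]
    {F : ι → X → E} {f : X → E} (hf : AEStronglyMeasurable f μ)
    (hF_int : ∀ i, Integrable (F i) μ) (hF_sum : Summable fun i ↦ ∫ x, ‖F i x‖ ∂μ)
    (h_lim : ∀ᵐ x ∂μ, HasSum (F · x) (f x)) :
    Integrable f μ := by
  refine ⟨hf, ?_⟩
  calc ∫⁻ x, ‖f x‖ₑ ∂μ ≤ ∫⁻ x, ∑' i, ‖F i x‖ₑ ∂μ :=
        lintegral_mono_ae <| h_lim.mono fun x hx ↦ hx.tsum_eq ▸ enorm_tsum_le_tsum_enorm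
    _ = ∑' i, ∫⁻ x, ‖F i x‖ₑ ∂μ :=
        lintegral_tsum fun i ↦ (hF_int i).aestronglyMeasurable.enorm
    _ = ∑' i, ENNReal.ofReal (∫ x, ‖F i x‖ ∂μ) := by
        simp_rw [ofReal_integral_norm_eq_lintegral_enorm (hF_int _)]
    _ = ENNReal.ofReal (∑' i, ∫ x, ‖F i x‖ ∂μ) :=
        (ENNReal.ofReal_tsum_of_nonneg (fun _ ↦ integral_nonneg fun _ ↦ norm_nonneg _)
          hF_sum).symm
    _ < ⊤ := ENNReal.ofReal_lt_top

section RpowWeightedScaling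

variable {f : ℝ → ℝ} {s b : ℝ}

theorem rpow_mul_comp_mul_eq (hb : 0 < b) {u : ℝ} (hu : 0 < u) :
    u ^ s * f (b * u) = b ^ (-s) * ((b * u) ^ s * f (b * u)) := by
  rw [mul_rpow hb.le hu.le, rpow_neg hb.le, mul_assoc,
    inv_mul_cancel_left₀ (rpow_pos_of_pos hb s).ne']

theorem MeasureTheory.IntegrableOn.rpow_mul_comp_mul
    (hf : IntegrableOn (fun t ↦ t ^ s * f t) (Ioi 0)) (hb : 0 < b) :
    IntegrableOn (fun u ↦ u ^ s * f (b * u)) (Ioi 0) := by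
  rw [← mul_zero b, ← integrableOn_Ioi_comp_mul_left_iff _ _ hb] at hf
  exact IntegrableOn.congr_fun (hf.const_mul (b ^ (-s)))
    (fun u hu ↦ (rpow_mul_comp_mul_eq hb hu).symm) measurableSet_Ioi

theorem integral_rpow_mul_comp_mul (hb : 0 < b) :
    ∫ u in Ioi 0, u ^ s * f (b * u) = b ^ (-(s + 1)) * ∫ t in Ioi 0, t ^ s * f t := by
  rw [setIntegral_congr_fun measurableSet_Ioi fun u hu ↦ rpow_mul_comp_mul_eq hb hu,
    integral_const_mul, integral_comp_mul_left_Ioi (fun t ↦ t ^ s * f t) 0 hb, mul_zero,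
    smul_eq_mul, ← mul_assoc, neg_add, rpow_add hb, rpow_neg_one]

theorem summable_integral_norm_rpow_mul_comp_nat_succ_mul (hs : 0 < s) :
    Summable fun n : ℕ ↦ ∫ u in Ioi 0, ‖u ^ s * f ((n + 1) * u)‖ := by
  have h_zeta : Summable fun n : ℕ ↦ ((n : ℝ) + 1) ^ (-(s + 1)) := by
    simpa using (summable_nat_add_iff 1).2 (summable_nat_rpow.2 (by linarith : -(s + 1) < -1))
  refine (h_zeta.mul_right (∫ t in Ioi 0, t ^ s * ‖f t‖)).congr fun n ↦ ?_
  rw [← integral_rpow_mul_comp_mul (f := fun t ↦ ‖f t‖) (by positivity)]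
  refine setIntegral_congr_fun measurableSet_Ioi fun u hu ↦ ?_
  rw [norm_mul, norm_of_nonneg (rpow_nonneg (le_of_lt hu) s)]

end RpowWeightedScaling

noncomputable def phiKernel (t : ℝ) : ℝ := (-t ^ 2 + 4 * t - 2) * exp (-t)

theorem hasSum_phiKernel_nat_succ_mul {u : ℝ} (hu : 0 < u) :
    HasSum (fun n : ℕ ↦ phiKernel ((n + 1) * u)) (phi u) := by
  set x := exp (-u) with hx
  have hx_pow (k : ℝ) (n : ℕ) (hk : k = n) : exp (-k * u) = x ^ n := by
    rw [hx, ← exp_nat_mul, hk]; ring_nf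
  have hx_lt : x < 1 := exp_lt_one_iff.2 (by linarith)
  have hx_norm : ‖x‖ < 1 := by rwa [norm_of_nonneg (exp_pos _).le]
  -- the coefficients come from `(n + 1)² = 2 * (n + 2).choose 2 - (n + 1).choose 1`
  have h0 := hasSum_choose_mul_geometric_of_norm_lt_one 0 hx_norm
  have h1 := hasSum_choose_mul_geometric_of_norm_lt_one 1 hx_norm
  have h2 := hasSum_choose_mul_geometric_of_norm_lt_one 2 hx_norm
  have hsum : HasSum (fun n : ℕ ↦ phiKernel ((n + 1) * u)) _ :=
    (((h2.mul_left (-2 * u ^ 2 * x)).add (h1.mul_left ((u ^ 2 + 4 * u) * x))).add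
      (h0.mul_left (-2 * x))).congr_fun fun n ↦ by
        rw [phiKernel, ← neg_mul, hx_pow (n + 1) (n + 1) (by push_cast; ring)]
        simp only [Nat.choose_zero_right, Nat.choose_one_right, Nat.cast_choose_two]
        push_cast
        ring
  convert hsum using 1
  have : 1 - x ≠ 0 := by linarith
  rw [phi, ← hx, hx_pow 2 2 (by norm_num), hx_pow 3 3 (by norm_num)]
  field_simp
  ring

theorem rpow_mul_phiKernel_eq {α t : ℝ} (ht : 0 < t) :
    t ^ α * phiKernel t = -(exp (-t) * t ^ (α + 3 - 1)) + 4 * (exp (-t) * t ^ (α + 2 - 1))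
      - 2 * (exp (-t) * t ^ (α + 1 - 1)) := by
  rw [show α + 3 - 1 = α + 2 by ring, show α + 2 - 1 = α + 1 by ring, add_sub_cancel_right,
    rpow_add ht, rpow_add ht, rpow_one, rpow_two, phiKernel]
  ring

theorem integrableOn_rpow_mul_phiKernel {α : ℝ} (hα : -1 < α) :
    IntegrableOn (fun t ↦ t ^ α * phiKernel t) (Ioi 0) := by
  have hΓ (k : ℝ) (hk : 1 ≤ k) := GammaIntegral_convergent (s := α + k) (by linarith)
  have h3 := (hΓ 3 (by norm_num)).fun_neg
  have h2 := (hΓ 2 (by norm_num)).const_mul 4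
  have h1 := (hΓ 1 le_rfl).const_mul 2
  exact IntegrableOn.congr_fun ((h3.fun_add h2).fun_sub h1)
    (fun t ht ↦ (rpow_mul_phiKernel_eq ht).symm) measurableSet_Ioi

theorem integral_rpow_mul_phiKernel {α : ℝ} (hα : -1 < α) :
    ∫ t in Ioi 0, t ^ α * phiKernel t = α * (1 - α) * Gamma (α + 1) := by
  have hΓ (k : ℝ) (hk : 1 ≤ k) := GammaIntegral_convergent (s := α + k) (by linarith)
  have h3 := (hΓ 3 (by norm_num)).fun_neg
  have h2 := (hΓ 2 (by norm_num)).const_mul 4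
  have h1 := (hΓ 1 le_rfl).const_mul 2
  rw [setIntegral_congr_fun measurableSet_Ioi fun t ht ↦ rpow_mul_phiKernel_eq ht,
    integral_sub (h3.fun_add h2) h1, integral_add h3 h2, integral_neg, integral_const_mul,
    integral_const_mul, ← Gamma_eq_integral (by linarith),
    ← Gamma_eq_integral (by linarith), ← Gamma_eq_integral (by linarith),
    show α + 3 = α + 1 + 1 + 1 by ring, show α + 2 = α + 1 + 1 by ring,
    Gamma_add_one (by linarith), Gamma_add_one (by linarith)]
  ring

/-- For every `α > 0`, `u ↦ u^α φ(u)` is integrable on `(0,∞)` and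
`∫₀^∞ u^α φ(u) du = α (1-α) Γ(α+1) ζ(α+1)`, where
`ζ(α+1) = ∑_{n=1}^∞ n^{-(α+1)}`. -/
theorem stmt_3 (α : ℝ) (hα : 0 < α) :
    IntegrableOn (fun u : ℝ => u ^ α * phi u) (Set.Ioi 0) ∧
    ∫ u in Set.Ioi (0:ℝ), u ^ α * phi u =
      α * (1 - α) * Real.Gamma (α + 1) * ∑' n : ℕ, ((n:ℝ)+1) ^ (-(α + 1)) := by
  set F : ℕ → ℝ → ℝ := fun n u ↦ u ^ α * phiKernel ((n + 1) * u)
  have hF_int (n : ℕ) : IntegrableOn (F n) (Ioi 0) :=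
    (integrableOn_rpow_mul_phiKernel (by linarith)).rpow_mul_comp_mul (Nat.cast_add_one_pos n)
  have hF_sum := summable_integral_norm_rpow_mul_comp_nat_succ_mul (f := phiKernel) hα
  have h_lim : ∀ᵐ u ∂volume.restrict (Ioi 0), HasSum (F · u) (u ^ α * phi u) :=
    (ae_restrict_mem measurableSet_Ioi).mono fun u hu ↦
      (hasSum_phiKernel_nat_succ_mul hu).mul_left _
  have h_meas : Measurable fun u : ℝ ↦ u ^ α * phi u := by unfold phi; fun_prop
  refine ⟨.of_hasSum_of_summable_integral_norm h_meas.aestronglyMeasurable hF_int hF_sum h_lim,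
    ?_⟩
  have h_int := hasSum_integral_of_summable_integral_norm hF_int hF_sum
  simp_rw [F, integral_rpow_mul_comp_mul (f := phiKernel) (Nat.cast_add_one_pos _),
    integral_rpow_mul_phiKernel (by linarith : -1 < α)] at h_int
  rw [integral_congr_ae (h_lim.mono fun u hu ↦ hu.tsum_eq.symm), ← h_int.tsum_eq,
    tsum_mul_right, mul_comm]
end

section
/- Let φ(u) := (e^{-u}(-2+4u-u²) + e^{-2u}(4-4u-u²) - 2e^{-3u})/(1-e^{-u})³ for u > 0. Then φ is integrable on (0,∞) and ∫₀^∞ φ(u) du = 1. -/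
/-!
Put `y = eᵘ - 1`. Then `φ = (-2u² + (4u - 3u²) y + (-2 + 4u - u²) y²) / y³`, and this is the
derivative of `F = g² + (u - 2) g` with `g = u / (eᵘ - 1)` (from `u² eᵘ / y² - 2u / y`, using
`g eᵘ = u + g`). As `g → 1` at `0⁺` while `g, u g → 0` at `∞`, the integral is `0 - (-1) = 1`.
Integrability: writing `y = u + r` with `0 ≤ r ≤ u²`, the numerator is `O(u³)` on `(0, 1]`, so `φ`
is bounded there; for `u ≥ 1`, `|φ| ≤ 32 u² e⁻ᵘ`.
-/

open MeasureTheory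

open Real Set Filter Topology

lemma exp_sub_one_pos {u : ℝ} (hu : 0 < u) : 0 < exp u - 1 :=
  sub_pos.2 (one_lt_exp_iff.2 hu)

lemma phi_eq_of_pos {u : ℝ} (hu : 0 < u) :
    phi u = (-2 * u ^ 2 + (4 * u - 3 * u ^ 2) * (exp u - 1)
      + (-2 + 4 * u - u ^ 2) * (exp u - 1) ^ 2) / (exp u - 1) ^ 3 := by
  have hy := (exp_sub_one_pos hu).ne'
  have h1 : 1 - exp (-u) ≠ 0 := sub_ne_zero.2 (exp_lt_one_iff.2 (neg_neg_of_pos hu)).ne'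
  rw [phi, show -2 * u = -u + -u by ring, show -3 * u = -u + -u + -u by ring]
  simp only [exp_add, exp_neg] at h1 ⊢
  field_simp
  ring

lemma abs_phi_le_of_le_one {u : ℝ} (hu : 0 < u) (hu1 : u ≤ 1) : |phi u| ≤ 16 := by
  set r := exp u - 1 - u with hr
  have hy : exp u - 1 = u + r := by rw [hr]; ring
  have hr0 : 0 ≤ r := by linarith [add_one_le_exp u]
  have hr2 : r ≤ u ^ 2 :=
    (le_abs_self _).trans (abs_exp_sub_one_sub_id_le (by rwa [abs_of_pos hu]))
  have hu3 : u ^ 3 ≤ (u + r) ^ 3 := pow_le_pow_left₀ hu.le (by linarith) 3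
  have hy3 : 0 < (u + r) ^ 3 := by positivity
  rw [phi_eq_of_pos hu, hy, abs_div, abs_of_pos hy3, div_le_iff₀ hy3]
  -- the terms of order `< 3` in `u` cancel
  have hN : -2 * u ^ 2 + (4 * u - 3 * u ^ 2) * (u + r) + (-2 + 4 * u - u ^ 2) * (u + r) ^ 2
      = u ^ 3 - u ^ 4 + r * (5 * u ^ 2 - 2 * u ^ 3) + r ^ 2 * (-2 + 4 * u - u ^ 2) := by ring
  rw [hN, abs_le]
  constructor <;> nlinarith [mul_nonneg hr0 hu.le, mul_nonneg (mul_nonneg hr0 hu.le) hu.le,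
    pow_pos hu 3, pow_pos hu 4, mul_nonneg hr0 hr0]

lemma abs_phi_le_of_one_le {u : ℝ} (hu : 1 ≤ u) : |phi u| ≤ 32 * (exp (-u) * u ^ 2) := by
  set y := exp u - 1
  have huy : u ≤ y := by linarith [add_one_le_exp u]
  have hey : exp u ≤ 2 * y := by linarith
  have hy0 : 0 ≤ y := by linarith
  have hy3 : 0 < y ^ 3 := pow_pos (by linarith) 3
  have hN : |-2 * u ^ 2 + (4 * u - 3 * u ^ 2) * y + (-2 + 4 * u - u ^ 2) * y ^ 2|
      ≤ 16 * u ^ 2 * y ^ 2 := by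
    rw [abs_le]
    constructor <;> nlinarith [mul_le_mul huy huy (by linarith) (by linarith),
      mul_le_mul_of_nonneg_left huy (by positivity : 0 ≤ u ^ 2 * y),
      mul_le_mul_of_nonneg_left hu (by positivity : 0 ≤ u * y ^ 2)]
  rw [phi_eq_of_pos (by linarith), abs_div, abs_of_pos hy3, div_le_iff₀ hy3]
  calc _ ≤ 16 * u ^ 2 * y ^ 2 := hN
    _ = 16 * (exp (-u) * u ^ 2) * y ^ 2 * exp u := by rw [exp_neg]; field_simp
    _ ≤ 32 * (exp (-u) * u ^ 2) * y ^ 3 := by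
      rw [show 32 * (exp (-u) * u ^ 2) * y ^ 3 = 16 * (exp (-u) * u ^ 2) * y ^ 2 * (2 * y) by ring]
      gcongr

lemma integrableOn_phi : IntegrableOn phi (Ioi 0) := by
  have hmeas : AEStronglyMeasurable phi := by
    refine Measurable.aestronglyMeasurable ?_
    unfold phi
    fun_prop
  rw [← Ioc_union_Ioi_eq_Ioi zero_le_one]
  refine (Measure.integrableOn_of_bounded (M := 16) measure_Ioc_lt_top.ne hmeas ?_).union ?_
  · filter_upwards [ae_restrict_mem measurableSet_Ioc] with u hu
    exact abs_phi_le_of_le_one hu.1 hu.2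
  · have hgamma : IntegrableOn (fun u ↦ exp (-u) * u ^ 2) (Ioi 1) := by
      refine ((GammaIntegral_convergent (s := 3) three_pos).mono_set
        (Ioi_subset_Ioi zero_le_one)).congr_fun (fun u _ ↦ ?_) measurableSet_Ioi
      rw [show (3 : ℝ) - 1 = (2 : ℕ) by norm_num]
      exact congrArg _ (rpow_natCast u 2)
    refine (hgamma.const_mul 32).mono' hmeas.restrict ?_
    filter_upwards [ae_restrict_mem measurableSet_Ioi] with u hu
    exact abs_phi_le_of_one_le hu.le

/-- `u / (eᵘ - 1)`; its value `0` at `u = 0` is junk, the limit there being `1`. -/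
noncomputable def divExpSubOne (u : ℝ) : ℝ := u / (exp u - 1)

lemma tendsto_divExpSubOne_nhdsNE_zero : Tendsto divExpSubOne (𝓝[≠] 0) (𝓝 1) := by
  have h := (hasDerivAt_iff_tendsto_slope.1 (hasDerivAt_exp 0)).inv₀ (by simp)
  rw [exp_zero, inv_one] at h
  refine h.congr' (eventually_nhdsWithin_of_forall fun u _ ↦ ?_)
  simp [slope_def_field, divExpSubOne]

lemma tendsto_pow_mul_divExpSubOne_atTop (n : ℕ) :
    Tendsto (fun u ↦ u ^ n * divExpSubOne u) atTop (𝓝 0) := by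
  have hden : Tendsto (fun u ↦ 1 - exp (-u)) atTop (𝓝 1) := by
    simpa using tendsto_exp_neg_atTop_nhds_zero.const_sub 1
  have h := (tendsto_pow_mul_exp_neg_atTop_nhds_zero (n + 1)).div hden one_ne_zero
  rw [zero_div] at h
  refine h.congr' ?_
  filter_upwards [eventually_gt_atTop 0] with u hu
  have := (exp_sub_one_pos hu).ne'
  simp only [Pi.div_apply, divExpSubOne, exp_neg]
  field_simp
  ring

noncomputable def phiPrimitive : ℝ → ℝ :=
  Function.update (fun u ↦ divExpSubOne u ^ 2 + (u - 2) * divExpSubOne u) 0 (-1)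

lemma hasDerivAt_phiPrimitive {u : ℝ} (hu : 0 < u) : HasDerivAt phiPrimitive (phi u) u := by
  have hy := (exp_sub_one_pos hu).ne'
  have hg : HasDerivAt divExpSubOne ((1 * (exp u - 1) - u * exp u) / (exp u - 1) ^ 2) u :=
    (hasDerivAt_id u).div ((hasDerivAt_exp u).sub_const 1) hy
  refine (((hg.pow 2).add (((hasDerivAt_id u).sub_const 2).mul hg)).congr_of_eventuallyEq
    ?_).congr_deriv ?_
  · filter_upwards [eventually_ne_nhds hu.ne'] with v hv
    exact Function.update_of_ne hv _ _
  · rw [phi_eq_of_pos hu, divExpSubOne, id]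
    simp only [Nat.cast_ofNat, Nat.add_one_sub_one, pow_one, one_mul]
    field_simp
    ring

lemma continuousWithinAt_phiPrimitive_zero : ContinuousWithinAt phiPrimitive (Ici 0) 0 := by
  rw [phiPrimitive, continuousWithinAt_update_same]
  have hg := tendsto_divExpSubOne_nhdsNE_zero.mono_left
    (nhdsWithin_mono 0 (sdiff_subset_compl (Ici 0) {0}))
  have hlin : Tendsto (fun u : ℝ ↦ u - 2) (𝓝[Ici 0 \ {0}] 0) (𝓝 (0 - 2)) :=
    (tendsto_id.sub_const 2).mono_left nhdsWithin_le_nhds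
  convert (hg.pow 2).add (hlin.mul hg) using 2
  norm_num

lemma tendsto_phiPrimitive_atTop : Tendsto phiPrimitive atTop (𝓝 0) := by
  have h0 := tendsto_pow_mul_divExpSubOne_atTop 0
  have h1 := tendsto_pow_mul_divExpSubOne_atTop 1
  simp only [pow_zero, one_mul, pow_one] at h0 h1
  have h := (h0.pow 2).add (h1.sub (h0.const_mul 2))
  rw [zero_pow two_ne_zero, zero_add, mul_zero, sub_zero] at h
  refine h.congr' ?_
  filter_upwards [eventually_ne_atTop 0] with u hu
  rw [phiPrimitive, Function.update_of_ne hu]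
  ring

/-- `φ` is integrable on `(0,∞)` and `∫₀^∞ φ(u) du = 1`. -/
theorem stmt_4 :
    IntegrableOn phi (Set.Ioi 0) ∧ ∫ u in Set.Ioi (0:ℝ), phi u = 1 := by
  refine ⟨integrableOn_phi, ?_⟩
  rw [integral_Ioi_of_hasDerivAt_of_tendsto continuousWithinAt_phiPrimitive_zero
    (fun _ hu ↦ hasDerivAt_phiPrimitive hu) integrableOn_phi tendsto_phiPrimitive_atTop]
  simp [phiPrimitive]
end

section
/- Let h(s) := 1 + ∑_{k=2}^{∞} ((-1)^{k+1}/(k-2)!) π^k s^{2k} ζ(k+1) for s ≥ 0, where ζ(s) = ∑_{n=1}^{∞} n^{-s}. Then there exists s > 0 with h(s) < 0; equivalently, there exists u > 0 with u² ∑_{n=1}^{∞} n^{-3} e^{-u/n} > 1. -/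
/-- `ζ(m) = ∑_{n=1}^∞ n^{-m}` for natural `m`. -/
noncomputable def zetaNat (m : ℕ) : ℝ := ∑' n : ℕ, 1 / ((n:ℝ)+1)^m

/-- `h(s) = 1 + ∑_{k=2}^∞ ((-1)^{k+1}/(k-2)!) π^k s^{2k} ζ(k+1)`,
indexed here by `k : ℕ` via `k + 2`. -/
noncomputable def hfun (s : ℝ) : ℝ :=
  1 + ∑' k : ℕ, ((-1:ℝ)^(k+3) / (Nat.factorial k)) * Real.pi^(k+2) * s^(2*(k+2))
        * zetaNat (k+3)

open Real Finset

/- ### Elementary exp bounds -/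

lemma exp_upper {x : ℝ} (h0 : 0 ≤ x) (h1 : x ≤ 1) :
    Real.exp x ≤ 1 + x + x^2/2 + x^3/6 + x^4/24 + x^5/120 + x^6/720 + x^7/5040
      + x^8 * (9/322560) := by
  have h := Real.exp_bound' h0 h1 (n := 8) (by norm_num)
  refine h.trans (le_of_eq ?_)
  simp [Finset.sum_range_succ, Nat.factorial]
  ring

/-- The summand at `u = 4`. -/
noncomputable def f4 (n : ℕ) : ℝ := (1/((n:ℝ)+1)^3) * Real.exp (-4/((n:ℝ)+1))

lemma f4_ge (n : ℕ) {B c : ℝ} (hB : Real.exp (4/((n:ℝ)+1)) ≤ B) (hc : 0 ≤ c)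
    (hcB : c * B ≤ 1/((n:ℝ)+1)^3) : c ≤ f4 n := by
  have hE0 := Real.exp_pos (4/((n:ℝ)+1))
  have h1 : c * Real.exp (4/((n:ℝ)+1)) ≤ 1/((n:ℝ)+1)^3 :=
    le_trans (mul_le_mul_of_nonneg_left hB hc) hcB
  unfold f4
  rw [show (-4:ℝ)/((n:ℝ)+1) = -(4/((n:ℝ)+1)) by ring, Real.exp_neg, ← div_eq_mul_inv,
    le_div_iff₀ hE0]
  exact h1

lemma summable_inv_cube : Summable (fun n : ℕ => 1/((n:ℝ)+1)^3) := by
  have h0 : Summable (fun n : ℕ => 1/(n:ℝ)^3) :=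
    Real.summable_one_div_nat_pow.mpr (by norm_num)
  have h := (summable_nat_add_iff 1).mpr h0
  refine h.congr fun n => ?_
  push_cast
  ring

lemma f4_nonneg (n : ℕ) : 0 ≤ f4 n := by
  unfold f4
  positivity

lemma summable_f4 : Summable f4 := by
  refine Summable.of_nonneg_of_le f4_nonneg (fun n => ?_) summable_inv_cube
  unfold f4
  have he : Real.exp (-4/((n:ℝ)+1)) ≤ 1 := by
    rw [Real.exp_le_one_iff]
    apply div_nonpos_of_nonpos_of_nonneg (by norm_num) (by positivity)
  have h3 : (0:ℝ) ≤ 1/((n:ℝ)+1)^3 := by positivity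
  nlinarith [Real.exp_pos (-4/((n:ℝ)+1))]

lemma key4 : (1:ℝ) < (4:ℝ)^2 * ∑' n : ℕ, (1 / ((n:ℝ)+1)^3) * Real.exp (-4 / ((n:ℝ)+1)) := by
  have hT : ∑' n : ℕ, (1 / ((n:ℝ)+1)^3) * Real.exp (-4 / ((n:ℝ)+1)) = ∑' n, f4 n := by
    apply tsum_congr; intro n; rfl
  -- individual lower bounds
  have h0 : (0.01831563:ℝ) ≤ f4 0 := by
    have hx : Real.exp (4/(((0:ℕ):ℝ)+1)) ≤ (2.7182818286:ℝ)^(4:ℕ) := by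
      have he : Real.exp (4/(((0:ℕ):ℝ)+1)) = Real.exp 1 ^ (4:ℕ) := by
        rw [← Real.exp_nat_mul]; norm_num
      rw [he]
      exact pow_le_pow_left₀ (Real.exp_pos _).le Real.exp_one_lt_d9.le 4
    exact f4_ge 0 hx (by norm_num) (by norm_num)
  have h1 : (0.01691691:ℝ) ≤ f4 1 := by
    have hx : Real.exp (4/(((1:ℕ):ℝ)+1)) ≤ (2.7182818286:ℝ)^(2:ℕ) := by
      have he : Real.exp (4/(((1:ℕ):ℝ)+1)) = Real.exp 1 ^ (2:ℕ) := by
        rw [← Real.exp_nat_mul]; norm_num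
      rw [he]
      exact pow_le_pow_left₀ (Real.exp_pos _).le Real.exp_one_lt_d9.le 2
    exact f4_ge 1 hx (by norm_num) (by norm_num)
  have h2 : (0.00976285:ℝ) ≤ f4 2 := by
    have h13 : Real.exp ((1:ℝ)/3) ≤ 1.3956125 :=
      (exp_upper (by norm_num) (by norm_num)).trans (by norm_num)
    have hx : Real.exp (4/(((2:ℕ):ℝ)+1)) ≤ (1.3956125:ℝ)^(4:ℕ) := by
      have he : Real.exp (4/(((2:ℕ):ℝ)+1)) = Real.exp ((1:ℝ)/3) ^ (4:ℕ) := by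
        rw [← Real.exp_nat_mul]; norm_num
      rw [he]
      exact pow_le_pow_left₀ (Real.exp_pos _).le h13 4
    exact f4_ge 2 hx (by norm_num) (by norm_num)
  have h3 : (0.00574811:ℝ) ≤ f4 3 :=
    f4_ge 3 (exp_upper (by norm_num) (by norm_num)) (by norm_num) (by norm_num)
  have h4 : (0.00359463:ℝ) ≤ f4 4 :=
    f4_ge 4 (exp_upper (by norm_num) (by norm_num)) (by norm_num) (by norm_num)
  have h5 : (0.00237693:ℝ) ≤ f4 5 :=
    f4_ge 5 (exp_upper (by norm_num) (by norm_num)) (by norm_num) (by norm_num)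
  have h6 : (0.0016464:ℝ) ≤ f4 6 :=
    f4_ge 6 (exp_upper (by norm_num) (by norm_num)) (by norm_num) (by norm_num)
  have h7 : (0.00118463:ℝ) ≤ f4 7 :=
    f4_ge 7 (exp_upper (by norm_num) (by norm_num)) (by norm_num) (by norm_num)
  have h8 : (0.00087953:ℝ) ≤ f4 8 :=
    f4_ge 8 (exp_upper (by norm_num) (by norm_num)) (by norm_num) (by norm_num)
  have h9 : (0.00067032:ℝ) ≤ f4 9 :=
    f4_ge 9 (exp_upper (by norm_num) (by norm_num)) (by norm_num) (by norm_num)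
  have h10 : (0.00052227:ℝ) ≤ f4 10 :=
    f4_ge 10 (exp_upper (by norm_num) (by norm_num)) (by norm_num) (by norm_num)
  have h11 : (0.00041465:ℝ) ≤ f4 11 :=
    f4_ge 11 (exp_upper (by norm_num) (by norm_num)) (by norm_num) (by norm_num)
  have h12 : (0.00033461:ℝ) ≤ f4 12 :=
    f4_ge 12 (exp_upper (by norm_num) (by norm_num)) (by norm_num) (by norm_num)
  have h13 : (0.00027386:ℝ) ≤ f4 13 :=
    f4_ge 13 (exp_upper (by norm_num) (by norm_num)) (by norm_num) (by norm_num)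
  have h14 : (0.00022694:ℝ) ≤ f4 14 :=
    f4_ge 14 (exp_upper (by norm_num) (by norm_num)) (by norm_num) (by norm_num)
  have h15 : (0.00019013:ℝ) ≤ f4 15 :=
    f4_ge 15 (exp_upper (by norm_num) (by norm_num)) (by norm_num) (by norm_num)
  have h16 : (0.00016086:ℝ) ≤ f4 16 :=
    f4_ge 16 (exp_upper (by norm_num) (by norm_num)) (by norm_num) (by norm_num)
  have h17 : (0.0001373:ℝ) ≤ f4 17 :=
    f4_ge 17 (exp_upper (by norm_num) (by norm_num)) (by norm_num) (by norm_num)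
  have h18 : (0.00011811:ℝ) ≤ f4 18 :=
    f4_ge 18 (exp_upper (by norm_num) (by norm_num)) (by norm_num) (by norm_num)
  have h19 : (0.00010234:ℝ) ≤ f4 19 :=
    f4_ge 19 (exp_upper (by norm_num) (by norm_num)) (by norm_num) (by norm_num)
  have hps : ∑ n ∈ Finset.range 20, f4 n ≤ ∑' n, f4 n :=
    Summable.sum_le_tsum _ (fun i _ => f4_nonneg i) summable_f4
  have hexp : (0.0635:ℝ) < ∑ n ∈ Finset.range 20, f4 n := by
    simp only [Finset.sum_range_succ, Finset.sum_range_zero]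
    linarith
  rw [hT]
  nlinarith

/- ### The series identity -/

lemma real_exp_eq (x : ℝ) : Real.exp x = ∑' k : ℕ, x^k / (Nat.factorial k : ℝ) := by
  rw [Real.exp_eq_exp_ℝ, NormedSpace.exp_eq_tsum_div]

/-- The double-series summand. -/
noncomputable def gfun (u : ℝ) (k n : ℕ) : ℝ :=
  ((-1:ℝ)^(k+3) / (Nat.factorial k)) * u^(k+2) * (1/((n:ℝ)+1)^(k+3))

lemma gfun_summable {u : ℝ} (hu : 0 ≤ u) : Summable (Function.uncurry (gfun u)) := by
  apply Summable.of_norm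
  have hbound : ∀ p : ℕ × ℕ, ‖Function.uncurry (gfun u) p‖ ≤
      (u^(p.1) * u^2 / (Nat.factorial p.1)) * (1/((p.2:ℝ)+1)^3) := by
    rintro ⟨k, n⟩
    have hn1 : (1:ℝ) ≤ (n:ℝ)+1 := by
      have : (0:ℝ) ≤ (n:ℝ) := Nat.cast_nonneg n
      linarith
    have hk : (0:ℝ) < (Nat.factorial k : ℝ) := by
      exact_mod_cast Nat.factorial_pos k
    simp only [Function.uncurry, gfun]
    rw [Real.norm_eq_abs, abs_mul, abs_mul, abs_div, abs_pow, abs_neg, abs_one, one_pow,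
      abs_of_nonneg hk.le, abs_of_nonneg (pow_nonneg hu _),
      abs_of_nonneg (by positivity : (0:ℝ) ≤ 1/((n:ℝ)+1)^(k+3))]
    have h1 : (1:ℝ)/((n:ℝ)+1)^(k+3) ≤ 1/((n:ℝ)+1)^3 := by
      apply one_div_le_one_div_of_le (by positivity)
      exact pow_le_pow_right₀ hn1 (by omega)
    have h2 : u^(k+2) = u^k * u^2 := by ring
    calc 1/(Nat.factorial k : ℝ) * u^(k+2) * (1/((n:ℝ)+1)^(k+3))
        ≤ 1/(Nat.factorial k : ℝ) * u^(k+2) * (1/((n:ℝ)+1)^3) := by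
          apply mul_le_mul_of_nonneg_left h1 (by positivity)
      _ = (u^k * u^2 / (Nat.factorial k : ℝ)) * (1/((n:ℝ)+1)^3) := by
          rw [h2]; ring
  refine Summable.of_nonneg_of_le (fun p => norm_nonneg _) hbound ?_
  apply summable_mul_of_summable_norm (f := fun k : ℕ => u^k * u^2 / (Nat.factorial k : ℝ))
    (g := fun n : ℕ => 1/((n:ℝ)+1)^3)
  · apply summable_norm_iff.mpr
    have := (Real.summable_pow_div_factorial u).mul_right (u^2)
    refine this.congr fun k => ?_
    ring
  · exact summable_norm_iff.mpr summable_inv_cube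

lemma hfun_eq {u s : ℝ} (hu : 0 ≤ u) (hsu : Real.pi * s^2 = u) :
    hfun s = 1 - u^2 * ∑' n : ℕ, (1 / ((n:ℝ)+1)^3) * Real.exp (-u / ((n:ℝ)+1)) := by
  have hu2 : ∀ k : ℕ, Real.pi^(k+2) * s^(2*(k+2)) = u^(k+2) := by
    intro k
    rw [pow_mul, ← mul_pow, hsu]
  have step1 : ∀ k : ℕ,
      ((-1:ℝ)^(k+3) / (Nat.factorial k)) * Real.pi^(k+2) * s^(2*(k+2)) * zetaNat (k+3)
        = ∑' n : ℕ, gfun u k n := by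
    intro k
    rw [zetaNat, ← tsum_mul_left]
    apply tsum_congr; intro n
    show _ = ((-1:ℝ)^(k+3) / (Nat.factorial k)) * u^(k+2) * (1/((n:ℝ)+1)^(k+3))
    rw [mul_assoc ((-1:ℝ)^(k+3) / (Nat.factorial k)), hu2 k]
  have step2 : ∀ n : ℕ, ∑' k : ℕ, gfun u k n
      = (-(u^2)) * ((1/((n:ℝ)+1)^3) * Real.exp (-u/((n:ℝ)+1))) := by
    intro n
    have hn0 : ((n:ℝ)+1) ≠ 0 := by positivity
    rw [real_exp_eq, ← mul_assoc, ← tsum_mul_left]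
    apply tsum_congr; intro k
    show ((-1:ℝ)^(k+3) / (Nat.factorial k)) * u^(k+2) * (1/((n:ℝ)+1)^(k+3)) = _
    have hk : ((Nat.factorial k : ℝ)) ≠ 0 := by
      exact_mod_cast (Nat.factorial_pos k).ne'
    rw [div_pow, neg_pow u k, pow_add ((-1:ℝ)) k 3, pow_add u k 2, pow_add ((n:ℝ)+1) k 3]
    field_simp
  have swap : ∑' k : ℕ, ∑' n : ℕ, gfun u k n = ∑' n : ℕ, ∑' k : ℕ, gfun u k n :=
    (Summable.tsum_comm (gfun_summable hu)).symm
  have : hfun s = 1 + ∑' n : ℕ, ∑' k : ℕ, gfun u k n := by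
    rw [hfun, ← swap]
    congr 1
    exact tsum_congr step1
  rw [this]
  have : ∑' n : ℕ, ∑' k : ℕ, gfun u k n
      = (-(u^2)) * ∑' n : ℕ, (1/((n:ℝ)+1)^3) * Real.exp (-u/((n:ℝ)+1)) := by
    rw [← tsum_mul_left]
    exact tsum_congr step2
  rw [this]
  ring

/- ### Main theorem -/

/-- There is `s > 0` with `h(s) < 0`; equivalently, there is `u > 0` with
`u² ∑_{n=1}^∞ n^{-3} e^{-u/n} > 1`. -/
theorem stmt_9 :
    (∃ s : ℝ, 0 < s ∧ hfun s < 0) ∧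
    (∃ u : ℝ, 0 < u ∧
      1 < u^2 * ∑' n : ℕ, (1 / ((n:ℝ)+1)^3) * Real.exp (-u / ((n:ℝ)+1))) := by
  constructor
  · refine ⟨Real.sqrt (4/Real.pi), Real.sqrt_pos.mpr (by positivity), ?_⟩
    have hsu : Real.pi * (Real.sqrt (4/Real.pi))^2 = 4 := by
      rw [Real.sq_sqrt (by positivity)]
      field_simp
    rw [hfun_eq (by norm_num) hsu]
    have := key4
    linarith
  · exact ⟨4, by norm_num, key4⟩
end

section
/- Let z₁, z₂ ∈ ℂ with z₁ ≠ z₂, and define 2×2 complex matrices A, B, C by A_{ij} = exp(π z_i \overline{z_j}), B_{ij} = π \overline{z_j} exp(π z_i \overline{z_j}), C_{ij} = (π² z_i \overline{z_j} + π) exp(π z_i \overline{z_j}) for i,j ∈ {1,2}. Then A is invertible, and with M := C - B A^{-1} B* (B* the conjugate transpose of B) and per(M) := M_{11}M_{22} + M_{12}M_{21}, one has per(M)/det(πA) = 1 - φ(π|z₁-z₂|²), where φ(u) = (e^{-u}(-2+4u-u²) + e^{-2u}(4-4u-u²) - 2e^{-3u})/(1-e^{-u})³. -/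
open Real in
theorem one_sub_phi_eq {u : ℝ} (hu : u ≠ 0) :
    1 - phi u =
      (exp u * (exp u - 1 - u) ^ 2 + (exp u - 1 - exp u * u) ^ 2) / (exp u - 1) ^ 3 := by
  have hX : exp u - 1 ≠ 0 := sub_ne_zero.2 (by simpa using hu)
  have h2 : exp (-2 * u) = exp (-u) ^ 2 := by rw [← exp_nat_mul]; ring_nf
  have h3 : exp (-3 * u) = exp (-u) ^ 3 := by rw [← exp_nat_mul]; ring_nf
  rw [phi, h2, h3, exp_neg]
  field_simp
  ring

namespace Matrix

variable {K : Type*} [Field K] {L X : K} {z w : Fin 2 → K} {A B B' C M : Matrix (Fin 2) (Fin 2) K}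

theorem det_fin_two_of_mul_eq (hp : A 0 0 * A 1 1 = X * (A 0 1 * A 1 0)) :
    A.det = A 0 1 * A 1 0 * (X - 1) := by
  rw [det_fin_two, hp]; ring

/- `A`, `B`, `B'`, `C` have the shape of the covariance blocks of `(f(z₁), f(z₂))` and
`(f'(z₁), f'(z₂))` for a kernel `K(z, ζ)` with `∂K/∂z = L ζ̄ K`, with `w` in the role of `z̄`. -/
theorem derivCovSchur_apply_self (hB : ∀ i j, B i j = L * w j * A i j)
    (hB' : ∀ i j, B' i j = L * z i * A i j) (hC : ∀ i j, C i j = (L ^ 2 * z i * w j + L) * A i j)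
    (hA : A.det ≠ 0) (i : Fin 2) :
    (C - B * A⁻¹ * B') i i =
      L * A i i * (1 - L * (z 0 - z 1) * (w 0 - w 1) * (A 0 1 * A 1 0) / A.det) := by
  rw [inv_def, Ring.inverse_eq_inv]
  fin_cases i <;>
  · simp only [Fin.zero_eta, Fin.mk_one, sub_apply, mul_apply, smul_apply, Fin.sum_univ_two,
      adjugate_fin_two, of_apply, cons_val', cons_val_zero, cons_val_one, empty_val',
      cons_val_fin_one, hB, hB', hC, smul_eq_mul]
    field_simp
    rw [det_fin_two]
    ring

theorem derivCovSchur_apply_of_ne (hB : ∀ i j, B i j = L * w j * A i j)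
    (hB' : ∀ i j, B' i j = L * z i * A i j) (hC : ∀ i j, C i j = (L ^ 2 * z i * w j + L) * A i j)
    (hA : A.det ≠ 0) {i j : Fin 2} (hij : i ≠ j) :
    (C - B * A⁻¹ * B') i j =
      L * A i j * (1 - L * (z 0 - z 1) * (w 0 - w 1) * (A 0 0 * A 1 1) / A.det) := by
  rw [inv_def, Ring.inverse_eq_inv]
  fin_cases i <;> fin_cases j <;> simp only [ne_eq, not_true_eq_false] at hij <;>
  · simp only [Fin.zero_eta, Fin.mk_one, sub_apply, mul_apply, smul_apply, Fin.sum_univ_two,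
      adjugate_fin_two, of_apply, cons_val', cons_val_zero, cons_val_one, empty_val',
      cons_val_fin_one, hB, hB', hC, smul_eq_mul]
    field_simp
    rw [det_fin_two]
    ring

theorem derivCovSchur_per_div_det (hB : ∀ i j, B i j = L * w j * A i j)
    (hB' : ∀ i j, B' i j = L * z i * A i j) (hC : ∀ i j, C i j = (L ^ 2 * z i * w j + L) * A i j)
    (hL : L ≠ 0) (hX : X ≠ 1) (hq : A 0 1 * A 1 0 ≠ 0)
    (hp : A 0 0 * A 1 1 = X * (A 0 1 * A 1 0)) (hM : M = C - B * A⁻¹ * B') :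
    (M 0 0 * M 1 1 + M 0 1 * M 1 0) / (L • A).det =
      (X * (X - 1 - L * (z 0 - z 1) * (w 0 - w 1)) ^ 2 +
        (X - 1 - X * (L * (z 0 - z 1) * (w 0 - w 1))) ^ 2) / (X - 1) ^ 3 := by
  have hX1 : X - 1 ≠ 0 := sub_ne_zero.2 hX
  have hdet := det_fin_two_of_mul_eq hp
  have hA : A.det ≠ 0 := by rw [hdet]; exact mul_ne_zero hq hX1
  set u := L * (z 0 - z 1) * (w 0 - w 1)
  have hper : M 0 0 * M 1 1 + M 0 1 * M 1 0 = L ^ 2 * (A 0 0 * A 1 1 *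
      (1 - u * (A 0 1 * A 1 0) / A.det) ^ 2 +
        A 0 1 * A 1 0 * (1 - u * (A 0 0 * A 1 1) / A.det) ^ 2) := by
    rw [hM, derivCovSchur_apply_self hB hB' hC hA, derivCovSchur_apply_self hB hB' hC hA,
      derivCovSchur_apply_of_ne hB hB' hC hA zero_ne_one,
      derivCovSchur_apply_of_ne hB hB' hC hA one_ne_zero]
    ring
  rw [hper, det_smul, Fintype.card_fin, hdet, hp]
  field_simp [left_ne_zero_of_mul hq, right_ne_zero_of_mul hq]

end Matrix

namespace Complex

open ComplexConjugate

theorem ofReal_mul_sub_mul_conj_sub (L : ℝ) (z w : ℂ) :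
    L * (z - w) * (conj z - conj w) = (L * ‖z - w‖ ^ 2 : ℝ) := by
  rw [← normSq_eq_norm_sq, ofReal_mul, normSq_eq_conj_mul_self, map_sub]
  ring

theorem exp_mul_conj_mul_exp_mul_conj (L : ℝ) (z w : ℂ) :
    exp (L * z * conj z) * exp (L * w * conj w) =
      exp (L * ‖z - w‖ ^ 2 : ℝ) * (exp (L * z * conj w) * exp (L * w * conj z)) := by
  rw [← ofReal_mul_sub_mul_conj_sub]
  simp only [← exp_add]
  ring_nf

theorem conj_mul_conj_mul_exp (L : ℝ) (z w : ℂ) :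
    conj (L * conj w * exp (L * z * conj w)) = L * w * exp (L * w * conj z) := by
  rw [map_mul, map_mul, ← exp_conj]
  simp only [map_mul, conj_conj, conj_ofReal]
  ring_nf

end Complex

open ComplexConjugate

/-- For distinct `z₁, z₂ ∈ ℂ` and the matrices `A, B, C` of covariances of the
planar Gaussian analytic function (with `L = π`), `A` is invertible and
`per(C - B A⁻¹ B*) / det(π A) = 1 - φ(π |z₁ - z₂|²)`. -/
theorem stmt_10 (z : Fin 2 → ℂ) (hz : z 0 ≠ z 1)
    (A B C M : Matrix (Fin 2) (Fin 2) ℂ)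
    (hA : ∀ i j, A i j = Complex.exp ((Real.pi : ℂ) * z i * (starRingEnd ℂ) (z j)))
    (hB : ∀ i j, B i j = (Real.pi : ℂ) * (starRingEnd ℂ) (z j) *
      Complex.exp ((Real.pi : ℂ) * z i * (starRingEnd ℂ) (z j)))
    (hC : ∀ i j, C i j = ((Real.pi : ℂ)^2 * z i * (starRingEnd ℂ) (z j) + (Real.pi : ℂ)) *
      Complex.exp ((Real.pi : ℂ) * z i * (starRingEnd ℂ) (z j)))
    (hM : M = C - B * A⁻¹ * B.conjTranspose) :
    IsUnit A ∧
    (M 0 0 * M 1 1 + M 0 1 * M 1 0) / ((Real.pi : ℂ) • A).det =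
      ((1 - phi (Real.pi * ‖z 0 - z 1‖^2) : ℝ) : ℂ) := by
  have hu : Real.pi * ‖z 0 - z 1‖ ^ 2 ≠ 0 := by positivity [sub_ne_zero.2 hz]
  have hX : Complex.exp (Real.pi * ‖z 0 - z 1‖ ^ 2 : ℝ) ≠ 1 := by
    rw [← Complex.ofReal_exp]; exact_mod_cast (Real.exp_eq_one_iff _).not.2 hu
  have hp : A 0 0 * A 1 1 = Complex.exp (Real.pi * ‖z 0 - z 1‖ ^ 2 : ℝ) * (A 0 1 * A 1 0) := by
    simp only [hA]; exact Complex.exp_mul_conj_mul_exp_mul_conj _ _ _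
  have hq : A 0 1 * A 1 0 ≠ 0 := by simp only [hA, ne_eq, mul_eq_zero, Complex.exp_ne_zero,
    or_self, not_false_eq_true]
  have hB' : ∀ i j, B i j = Real.pi * conj (z j) * A i j := fun i j => by rw [hB, hA]
  have hBH : ∀ i j, B.conjTranspose i j = Real.pi * z i * A i j := fun i j => by
    rw [Matrix.conjTranspose_apply, hB, hA, Complex.star_def, Complex.conj_mul_conj_mul_exp]
  have hC' : ∀ i j, C i j = (Real.pi ^ 2 * z i * conj (z j) + Real.pi) * A i j :=
    fun i j => by rw [hC, hA]
  refine ⟨(Matrix.isUnit_iff_isUnit_det A).2 ?_, ?_⟩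
  · rw [Matrix.det_fin_two_of_mul_eq hp, isUnit_iff_ne_zero]
    exact mul_ne_zero hq (sub_ne_zero.2 hX)
  rw [Matrix.derivCovSchur_per_div_det hB' hBH hC' (by exact_mod_cast Real.pi_ne_zero) hX hq hp hM,
    Complex.ofReal_mul_sub_mul_conj_sub, one_sub_phi_eq hu]
  norm_cast
end
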